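/- arXiv:1007.3807 — 4 statements merged into one kernel-verified Lean document; each statement's English description precedes it below -/
import Mathlib

section
/- Let M be a square matrix over a field indexed by a finite set V, and let Y ⊆ V be such that the principal submatrix M[Y] is nonsingular. Then for every subset X ⊆ V, det((M*Y)[X]) = det(M[Y Δ X]) / det(M[Y]), where M*Y denotes the principal pivot transform of M on Y and Δ denotes symmetric difference. -/
open Matrix

variable {V : Type*} [Fintype V] [DecidableEq V] {F : Type*} [Field F]

/-- The submatrix of `M` with rows indexed by `X` and columns indexed by `Y`. -/
def psub (M : Matrix V V F) (X Y : Finset V) : Matrix {a // a ∈ X} {a // a ∈ Y} F :=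
  fun i j => M i j

/-- The principal pivot transform `M*Y` of `M` on `Y`. -/
noncomputable def ppt (M : Matrix V V F) (Y : Finset V) : Matrix V V F :=
  fun i j =>
    if hi : i ∈ Y then
      if hj : j ∈ Y then (psub M Y Y)⁻¹ ⟨i, hi⟩ ⟨j, hj⟩
      else ((psub M Y Y)⁻¹ * psub M Y Yᶜ) ⟨i, hi⟩ ⟨j, Finset.mem_compl.mpr hj⟩
    else
      if hj : j ∈ Y then
        (-(psub M Yᶜ Y * (psub M Y Y)⁻¹)) ⟨i, Finset.mem_compl.mpr hi⟩ ⟨j, hj⟩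
      else
        (psub M Yᶜ Yᶜ - psub M Yᶜ Y * (psub M Y Y)⁻¹ * psub M Y Yᶜ)
          ⟨i, Finset.mem_compl.mpr hi⟩ ⟨j, Finset.mem_compl.mpr hj⟩

/-! Let `D` be the diagonal matrix with entries `1` on `Y` and `-1` off `Y`, and let `keepRows S A`
take the rows of `A` indexed by `S` and the rows of the identity elsewhere, so that
`det (keepRows S A) = det A[S]`. Multiplying out the blocks of the pivot transform gives
`M*Y · D · keepRows Y M = D · keepRows Yᶜ M`. Row `i` of `keepRows X N · B` is row `i` of `N · B`
for `i ∈ X` and row `i` of `B` otherwise, so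
`keepRows X (M*Y) · D · keepRows Y M = D · keepRows (Y Δ X) M`,
and taking determinants gives `det (M*Y)[X] · det M[Y] = det M[Y Δ X]`. -/

def blockEquiv (S : Finset V) : {a // a ∈ S} ⊕ {a // a ∈ Sᶜ} ≃ V :=
  (Equiv.sumCongr (Equiv.refl _) (Equiv.subtypeEquivRight fun _ => Finset.mem_compl)).trans
    (Equiv.sumCompl (· ∈ S))

@[simp]
theorem blockEquiv_inl (S : Finset V) (i : {a // a ∈ S}) : blockEquiv S (.inl i) = i := rfl

@[simp]
theorem blockEquiv_inr (S : Finset V) (i : {a // a ∈ Sᶜ}) : blockEquiv S (.inr i) = i := rfl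

section CommRing

variable {R : Type*} [CommRing R]

def keepRows (S : Finset V) (A : Matrix V V R) : Matrix V V R :=
  of fun i j => if i ∈ S then A i j else (1 : Matrix V V R) i j

def signDiag (Y : Finset V) : Matrix V V R :=
  diagonal fun i => if i ∈ Y then 1 else -1

omit [Fintype V] in
theorem keepRows_apply (S : Finset V) (A : Matrix V V R) (i j : V) :
    keepRows S A i j = if i ∈ S then A i j else (1 : Matrix V V R) i j := rfl

theorem det_keepRows (S : Finset V) (A : Matrix V V R) :
    (keepRows S A).det = (psub A S S).det := by
  rw [twoBlockTriangular_det _ (· ∈ S)]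
  · have hcompl : toSquareBlockProp (keepRows S A) (· ∉ S) = 1 := by
      ext i j
      simp [toSquareBlockProp_def, keepRows_apply, i.2, one_apply, Subtype.ext_iff]
    have hS : toSquareBlockProp (keepRows S A) (· ∈ S) = psub A S S := by
      ext i j
      simp [toSquareBlockProp_def, keepRows_apply, psub]
    rw [hcompl, hS, det_one, mul_one]
    -- the two determinants use different `Fintype` instances on `{a // a ∈ S}`
    convert rfl
  · intro i hi j hj
    simp [keepRows_apply, hi, one_apply, ne_of_mem_of_not_mem hj hi |>.symm]

theorem keepRows_mul_apply (S : Finset V) (A B : Matrix V V R) (i : V) :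
    (keepRows S A * B) i = if i ∈ S then (A * B) i else B i := by
  ext k
  by_cases hi : i ∈ S <;> simp [mul_apply, keepRows_apply, hi, one_apply]

theorem signDiag_mul_apply (Y : Finset V) (A : Matrix V V R) (i j : V) :
    (signDiag Y * A : Matrix V V R) i j = if i ∈ Y then A i j else -A i j := by
  by_cases hi : i ∈ Y <;> simp [signDiag, diagonal_mul, hi]

theorem isUnit_det_signDiag (Y : Finset V) : IsUnit (signDiag Y : Matrix V V R).det := by
  rw [signDiag, det_diagonal]
  exact IsUnit.prod_univ_iff.mpr fun i => by split_ifs <;> simp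

theorem submatrix_blockEquiv_signDiag_mul_keepRows (M : Matrix V V R) (Y : Finset V) :
    (signDiag Y * keepRows Y M).submatrix (blockEquiv Y) (blockEquiv Y) =
      fromBlocks (psub M Y Y) (psub M Y Yᶜ) 0 (-1) := by
  ext (i | i) (j | j)
  · simp [signDiag_mul_apply, keepRows_apply, i.2, psub]
  · simp [signDiag_mul_apply, keepRows_apply, i.2, psub]
  · simp [signDiag_mul_apply, keepRows_apply, Finset.mem_compl.mp i.2, one_apply,
      (ne_of_mem_of_not_mem j.2 (Finset.mem_compl.mp i.2)).symm]
  · simp [signDiag_mul_apply, keepRows_apply, Finset.mem_compl.mp i.2, one_apply]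

theorem submatrix_blockEquiv_signDiag_mul_keepRows_compl (M : Matrix V V R) (Y : Finset V) :
    (signDiag Y * keepRows Yᶜ M).submatrix (blockEquiv Y) (blockEquiv Y) =
      fromBlocks 1 0 (-psub M Yᶜ Y) (-psub M Yᶜ Yᶜ) := by
  ext (i | i) (j | j)
  · simp [signDiag_mul_apply, keepRows_apply, i.2, one_apply]
  · simp [signDiag_mul_apply, keepRows_apply, i.2, one_apply,
      ne_of_mem_of_not_mem i.2 (Finset.mem_compl.mp j.2)]
  · simp [signDiag_mul_apply, keepRows_apply, Finset.mem_compl.mp i.2, psub]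
  · simp [signDiag_mul_apply, keepRows_apply, Finset.mem_compl.mp i.2, psub]

end CommRing

theorem submatrix_blockEquiv_ppt (M : Matrix V V F) (Y : Finset V) :
    (ppt M Y).submatrix (blockEquiv Y) (blockEquiv Y) =
      fromBlocks (psub M Y Y)⁻¹ ((psub M Y Y)⁻¹ * psub M Y Yᶜ)
        (-(psub M Yᶜ Y * (psub M Y Y)⁻¹))
        (psub M Yᶜ Yᶜ - psub M Yᶜ Y * (psub M Y Y)⁻¹ * psub M Y Yᶜ) := by
  ext (i | i) (j | j)
  · simp [ppt, i.2, j.2]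
  · simp [ppt, i.2, Finset.mem_compl.mp j.2]
  · simp [ppt, Finset.mem_compl.mp i.2, j.2]
  · simp [ppt, Finset.mem_compl.mp i.2, Finset.mem_compl.mp j.2]

theorem ppt_mul_signDiag_mul_keepRows (M : Matrix V V F) (Y : Finset V)
    (hY : IsUnit (psub M Y Y).det) :
    ppt M Y * (signDiag Y * keepRows Y M) = signDiag Y * keepRows Yᶜ M := by
  let e := blockEquiv Y
  apply (reindex e.symm e.symm).injective
  simp only [reindex_apply, Equiv.symm_symm]
  rw [← submatrix_mul_equiv _ _ _ e, submatrix_blockEquiv_ppt,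
    submatrix_blockEquiv_signDiag_mul_keepRows, submatrix_blockEquiv_signDiag_mul_keepRows_compl,
    fromBlocks_multiply]
  simp only [nonsing_inv_mul _ hY, Matrix.mul_zero, add_zero, Matrix.mul_neg, Matrix.mul_one,
    add_neg_cancel, Matrix.neg_mul, Matrix.mul_assoc, mul_neg, mul_one, neg_sub, fromBlocks_inj,
    true_and]
  abel

theorem keepRows_ppt_mul_signDiag_mul_keepRows (M : Matrix V V F) (Y X : Finset V)
    (hY : IsUnit (psub M Y Y).det) :
    keepRows X (ppt M Y) * (signDiag Y * keepRows Y M) =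
      signDiag Y * keepRows (symmDiff Y X) M := by
  ext i k
  rw [keepRows_mul_apply, ppt_mul_signDiag_mul_keepRows M Y hY]
  by_cases hiX : i ∈ X <;> by_cases hiY : i ∈ Y <;>
    simp [signDiag_mul_apply, keepRows_apply, hiX, hiY, Finset.mem_symmDiff]

/-- **Tucker's theorem.**  If `M[Y]` is nonsingular then for every `X ⊆ V`,
`det((M*Y)[X]) = det(M[Y Δ X]) / det(M[Y])`. -/
theorem tucker_det_ppt (M : Matrix V V F) (Y : Finset V)
    (hY : IsUnit (psub M Y Y).det) (X : Finset V) :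
    (psub (ppt M Y) X X).det
      = (psub M (symmDiff Y X) (symmDiff Y X)).det / (psub M Y Y).det := by
  have hdet := congrArg det (keepRows_ppt_mul_signDiag_mul_keepRows M Y X hY)
  simp only [det_mul, det_keepRows] at hdet
  rw [eq_div_iff hY.ne_zero]
  exact (isUnit_det_signDiag Y).mul_left_cancel (by rw [← hdet]; ring)
end

section
/- Let M = (m_ij) be a skew-symmetric or symmetric V×V matrix over a field F, let K = F² with bilinear form b⁻ if M is symmetric and b⁺ if M is skew-symmetric, and let a, b : V → K be supplementary chains (⟨a(x),a(x)⟩ = ⟨b(x),b(x)⟩ = 0 and ⟨a(x),b(x)⟩ = 1 for all x). Define f_i : V → K by f_i(j) = m_ij·a(j) for j ≠ i and f_i(i) = m_ii·a(i) + b(i). Then the span N of {f_i : i ∈ V} is a totally isotropic subspace of K^V of dimension |V| (with respect to the form ⟨f,g⟩ = Σ_{x∈V} ⟨f(x),g(x)⟩_K). -/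
open Matrix

variable {V : Type*} [Fintype V] [DecidableEq V] {F : Type*} [Field F]

/-- The symmetric bilinear form `b⁺((a,b),(c,d)) = ad + bc` on `K = F²`. -/
def bplus : F × F → F × F → F := fun x y => x.1 * y.2 + x.2 * y.1

/-- The skew-symmetric bilinear form `b⁻((a,b),(c,d)) = ad − bc` on `K = F²`. -/
def bminus : F × F → F × F → F := fun x y => x.1 * y.2 - x.2 * y.1

/-! The pairing of the `j`-th coordinate with `a(j)` picks out the coefficient of `f_j`, so the
`f_i` are linearly independent. Since each `(a(x), b(x))` is a hyperbolic pair,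
`⟨f_i, f_k⟩ = m_ik + m_ki ⟨b(i), a(i)⟩`, and `⟨b(i), a(i)⟩ = ±1` has exactly the sign for which the
(skew-)symmetry of `M` makes this vanish; bilinearity extends the orthogonality to the span. -/

open Submodule

theorem LinearMap.apply_eq_zero_of_mem_span_of_mem_span {R M N P : Type*} [CommSemiring R]
    [AddCommMonoid M] [AddCommMonoid N] [AddCommMonoid P] [Module R M] [Module R N] [Module R P]
    (B : M →ₗ[R] N →ₗ[R] P) {s : Set M} {t : Set N} (h : ∀ x ∈ s, ∀ y ∈ t, B x y = 0)
    {x : M} {y : N} (hx : x ∈ span R s) (hy : y ∈ span R t) : B x y = 0 := by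
  have hxy := apply_mem_map₂ B hx hy
  rwa [map₂_span_span, span_eq_bot.2 (by rintro _ ⟨x, hx, y, hy, rfl⟩; exact h x hx y hy),
    mem_bot] at hxy

section Chains

variable {R K ι : Type*} [CommRing R] [AddCommGroup K] [Module R K]

def chainForm [Fintype ι] (B : LinearMap.BilinForm R K) : LinearMap.BilinForm R (ι → K) :=
  ∑ x, B.compl₁₂ (LinearMap.proj x) (LinearMap.proj x)

@[simp]
theorem chainForm_apply [Fintype ι] (B : LinearMap.BilinForm R K) (u w : ι → K) :
    chainForm B u w = ∑ x, B (u x) (w x) := by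
  simp [chainForm]

variable [DecidableEq ι]

def rowChain (M : Matrix ι ι R) (a b : ι → K) (i : ι) : ι → K :=
  fun j => if j = i then M i i • a i + b i else M i j • a j

theorem rowChain_apply (M : Matrix ι ι R) (a b : ι → K) (i j : ι) :
    rowChain M a b i j = M i j • a j + if j = i then b j else 0 := by
  unfold rowChain
  split_ifs with h
  · subst h; rfl
  · rw [add_zero]

variable {B : LinearMap.BilinForm R K} {a b : ι → K}

theorem chainForm_rowChain [Fintype ι] (M : Matrix ι ι R) (haa : ∀ j, B (a j) (a j) = 0)
    (hbb : ∀ j, B (b j) (b j) = 0) (hab : ∀ j, B (a j) (b j) = 1) (i k : ι) :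
    chainForm B (rowChain M a b i) (rowChain M a b k) = M i k + M k i * B (b i) (a i) := by
  have hterm : ∀ j, B (rowChain M a b i j) (rowChain M a b k j) =
      (if j = k then M i j else 0) + if j = i then M k j * B (b j) (a j) else 0 := by
    intro j
    obtain rfl | hi := eq_or_ne j i <;> obtain rfl | hk := eq_or_ne j k <;>
      simp [rowChain_apply, *]
  simp only [chainForm_apply, hterm, Finset.sum_add_distrib, Finset.sum_ite_eq', Finset.mem_univ,
    if_true]

theorem linearIndependent_rowChain (M : Matrix ι ι R) (haa : ∀ j, B (a j) (a j) = 0)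
    (hab : ∀ j, B (a j) (b j) = 1) : LinearIndependent R (rowChain M a b) := by
  let pairA : (ι → K) →ₗ[R] ι → R := LinearMap.pi fun j => B (a j) ∘ₗ LinearMap.proj j
  refine .of_comp pairA ?_
  convert Pi.linearIndependent_single_one ι R using 1
  ext i j
  by_cases h : j = i <;> simp [pairA, rowChain_apply, h, haa, hab]

end Chains

theorem bplus_swap (x y : F × F) : bplus y x = bplus x y := by
  unfold bplus; ring

theorem bminus_swap (x y : F × F) : bminus y x = -bminus x y := by
  unfold bminus; ring

def bplusForm : LinearMap.BilinForm F (F × F) :=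
  (LinearMap.mul F F).compl₁₂ (.fst F F F) (.snd F F F) +
    (LinearMap.mul F F).compl₁₂ (.snd F F F) (.fst F F F)

def bminusForm : LinearMap.BilinForm F (F × F) :=
  (LinearMap.mul F F).compl₁₂ (.fst F F F) (.snd F F F) -
    (LinearMap.mul F F).compl₁₂ (.snd F F F) (.fst F F F)

theorem bplusForm_apply (x y : F × F) : bplusForm x y = bplus x y := rfl

theorem bminusForm_apply (x y : F × F) : bminusForm x y = bminus x y := rfl

/-- Given a skew-symmetric or symmetric matrix `M` over `F` (with the bilinear
form on `K = F²` chosen to be `b⁺` in the skew-symmetric case and `b⁻` in the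
symmetric case) and supplementary chains `a`, `b`, the span of the chains
`f_i` (with `f_i(j) = m_ij a(j)` for `j ≠ i` and `f_i(i) = m_ii a(i) + b(i)`)
is a totally isotropic subspace of `K^V` of dimension `|V|`, i.e. a Lagrangian
chain-group. -/
theorem span_rows_lagrangian (M : Matrix V V F) (β : F × F → F × F → F)
    (a b : V → F × F)
    (hM : (Mᵀ = -M ∧ (∀ i, M i i = 0) ∧ β = (bplus : F × F → F × F → F)) ∨
          (Mᵀ = M ∧ β = (bminus : F × F → F × F → F)))
    (hsupp : ∀ x, β (a x) (a x) = 0 ∧ β (b x) (b x) = 0 ∧ β (a x) (b x) = 1) :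
    (∀ u ∈ Submodule.span F
        (Set.range fun i : V => fun j : V =>
          if j = i then M i i • a i + b i else M i j • a j),
      ∀ w ∈ Submodule.span F
        (Set.range fun i : V => fun j : V =>
          if j = i then M i i • a i + b i else M i j • a j),
        ∑ x, β (u x) (w x) = 0) ∧
    Module.finrank F
      (Submodule.span F
        (Set.range fun i : V => fun j : V =>
          if j = i then M i i • a i + b i else M i j • a j))
      = Fintype.card V := by
  obtain ⟨B, rfl, hMB⟩ : ∃ B : LinearMap.BilinForm F (F × F),
      β = (fun x y => B x y) ∧ ∀ i k, M i k + M k i * B (b i) (a i) = 0 := by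
    rcases hM with ⟨hskew, -, rfl⟩ | ⟨hsymm, rfl⟩
    · refine ⟨bplusForm, rfl, fun i k => ?_⟩
      have hki : M k i = -M i k := congr_fun₂ hskew i k
      rw [bplusForm_apply, bplus_swap, (hsupp i).2.2, hki]
      ring
    · refine ⟨bminusForm, rfl, fun i k => ?_⟩
      have hki : M k i = M i k := congr_fun₂ hsymm i k
      rw [bminusForm_apply, bminus_swap, (hsupp i).2.2, hki]
      ring
  have haa j := (hsupp j).1
  have hbb j := (hsupp j).2.1
  have hab j := (hsupp j).2.2
  refine ⟨fun u hu w hw => ?_, finrank_span_eq_card (linearIndependent_rowChain M haa hab)⟩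
  rw [← chainForm_apply]
  refine (chainForm B).apply_eq_zero_of_mem_span_of_mem_span ?_ hu hw
  rintro _ ⟨i, rfl⟩ _ ⟨k, rfl⟩
  exact (chainForm_rowChain M haa hbb hab i k).trans (hMB i k)
end

section
/- Let (M,a,b) be a special matrix representation of a Lagrangian chain-group N on V to K = F², and let a' be a chain with a'(v) ∈ {±(1,0), ±(0,1)} for all v ∈ V. Let Y = {x ∈ V : a'(x) ≠ ±a(x)}. Then a' is a special eulerian chain of N if and only if the principal submatrix M[Y] is nonsingular. -/
open Matrix

variable {V : Type*} [Fintype V] [DecidableEq V] {F : Type*} [Field F]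
  [DecidableEq F]

set_option linter.unusedSectionVars false in
lemma SE.key_mem (β : F × F → F × F → F) (u v w : F × F)
    (hβ : β = (bplus : F × F → F × F → F) ∨ β = bminus)
    (hu : u = (1,0) ∨ u = (-1,0) ∨ u = (0,1) ∨ u = (0,-1))
    (hv : v = (1,0) ∨ v = (-1,0) ∨ v = (0,1) ∨ v = (0,-1))
    (hw : w = (1,0) ∨ w = (-1,0) ∨ w = (0,1) ∨ w = (0,-1))
    (huv : β u v = 1)
    (hm : w ≠ u ∧ w ≠ -u) :
    β u w ≠ 0 ∧ β v w = 0 := by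
  obtain ⟨h1, h2⟩ := hm
  rcases hβ with rfl | rfl <;>
    rcases hu with rfl|rfl|rfl|rfl <;> rcases hv with rfl|rfl|rfl|rfl <;>
    rcases hw with rfl|rfl|rfl|rfl <;>
    simp_all [bplus, bminus, Prod.ext_iff]

set_option linter.unusedSectionVars false in
lemma SE.key_notmem (β : F × F → F × F → F) (u v w : F × F)
    (hβ : β = (bplus : F × F → F × F → F) ∨ β = bminus)
    (hu : u = (1,0) ∨ u = (-1,0) ∨ u = (0,1) ∨ u = (0,-1))
    (hv : v = (1,0) ∨ v = (-1,0) ∨ v = (0,1) ∨ v = (0,-1))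
    (huv : β u v = 1)
    (hm : w = u ∨ w = -u) :
    β u w = 0 ∧ β v w ≠ 0 := by
  rcases hβ with rfl | rfl <;>
    rcases hu with rfl|rfl|rfl|rfl <;> rcases hv with rfl|rfl|rfl|rfl <;>
    rcases hm with rfl|rfl <;>
    simp_all [bplus, bminus, Prod.ext_iff]

set_option linter.unusedSectionVars false in
lemma SE.beta_left (β : F × F → F × F → F)
    (hβ : β = (bplus : F × F → F × F → F) ∨ β = bminus)
    (s t : F) (u v w : F × F) : β (s • u + t • v) w = s * β u w + t * β v w := by
  rcases hβ with rfl | rfl <;> simp [bplus, bminus] <;> ring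

set_option linter.unusedSectionVars false in
lemma SE.beta_right (β : F × F → F × F → F)
    (hβ : β = (bplus : F × F → F × F → F) ∨ β = bminus)
    (s t : F) (u v w : F × F) : β w (s • u + t • v) = s * β w u + t * β w v := by
  rcases hβ with rfl | rfl <;> simp [bplus, bminus] <;> ring

set_option linter.unusedSectionVars false in
lemma SE.beta_zero_right (β : F × F → F × F → F)
    (hβ : β = (bplus : F × F → F × F → F) ∨ β = bminus)
    (u : F × F) : β u 0 = 0 := by
  rcases hβ with rfl | rfl <;> simp [bplus, bminus]

/-- Let `(M,a,b)` be a special matrix representation of the Lagrangian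
chain-group `N` spanned by the chains `f_i`, and let `a'` be a chain with
values in `{±(1,0), ±(0,1)}`.  With `Y = {x : a'(x) ≠ ±a(x)}`, the chain `a'`
is special eulerian for `N` if and only if `M[Y]` is nonsingular. -/
theorem special_eulerian_iff_nonsingular (M : Matrix V V F)
    (β : F × F → F × F → F) (a b a' : V → F × F)
    (hM : (Mᵀ = -M ∧ (∀ i, M i i = 0) ∧ β = (bplus : F × F → F × F → F)) ∨
          (Mᵀ = M ∧ β = (bminus : F × F → F × F → F)))
    (ha : ∀ v, a v = (1, 0) ∨ a v = (-1, 0) ∨ a v = (0, 1) ∨ a v = (0, -1))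
    (hb : ∀ v, b v = (1, 0) ∨ b v = (-1, 0) ∨ b v = (0, 1) ∨ b v = (0, -1))
    (hsupp : ∀ x, β (a x) (a x) = 0 ∧ β (b x) (b x) = 0 ∧ β (a x) (b x) = 1)
    (ha' : ∀ v, a' v = (1, 0) ∨ a' v = (-1, 0) ∨ a' v = (0, 1) ∨ a' v = (0, -1)) :
    (∀ f ∈ Submodule.span F
        (Set.range fun i : V => fun j : V =>
          if j = i then M i i • a i + b i else M i j • a j),
      (∀ x, β (f x) (a' x) = 0) → f = 0)
      ↔ IsUnit (psub M (Finset.univ.filter fun x => a' x ≠ a x ∧ a' x ≠ -a x)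
          (Finset.univ.filter fun x => a' x ≠ a x ∧ a' x ≠ -a x)).det := by
  classical
  have hβ : β = (bplus : F × F → F × F → F) ∨ β = bminus := by
    rcases hM with ⟨_, _, h⟩ | ⟨_, h⟩
    · exact Or.inl h
    · exact Or.inr h
  set Y : Finset V := Finset.univ.filter fun x => a' x ≠ a x ∧ a' x ≠ -a x with hY
  set fi : V → V → F × F := (fun i : V => fun j : V =>
      if j = i then M i i • a i + b i else M i j • a j) with hfi
  set A : Matrix {a // a ∈ Y} {a // a ∈ Y} F := psub M Y Y with hA
  have hfx : ∀ (c : V → F) (x : V),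
      (∑ i, c i • fi i) x = (∑ i, c i * M i x) • a x + c x • b x := by
    intro c x
    have h1 : ∀ i : V, c i • fi i x
        = (c i * M i x) • a x + (if x = i then c i • b i else 0) := by
      intro i
      by_cases h : x = i
      · subst h; simp [hfi, smul_add, smul_smul]
      · simp [hfi, h, smul_smul]
    calc (∑ i, c i • fi i) x = ∑ i, c i • fi i x := by simp
    _ = ∑ i, ((c i * M i x) • a x + (if x = i then c i • b i else 0)) :=
        Finset.sum_congr rfl fun i _ => h1 i
    _ = (∑ i, c i * M i x) • a x + c x • b x := by
        rw [Finset.sum_add_distrib, Finset.sum_ite_eq, ← Finset.sum_smul]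
        simp
  have hβfx : ∀ (c : V → F) (x : V),
      β ((∑ i, c i • fi i) x) (a' x)
        = (∑ i, c i * M i x) * β (a x) (a' x) + c x * β (b x) (a' x) := by
    intro c x; rw [hfx]; exact SE.beta_left β hβ _ _ _ _ _
  have hcoef : ∀ (c : V → F) (x : V), β (a x) ((∑ i, c i • fi i) x) = c x := by
    intro c x
    rw [hfx, SE.beta_right β hβ, (hsupp x).1, (hsupp x).2.2]; ring
  have hzero : ∀ c : V → F, (∑ i, c i • fi i) = 0 ↔ c = 0 := by
    intro c
    constructor
    · intro h; funext x
      have h2 := hcoef c x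
      rw [h] at h2
      simp only [Pi.zero_apply] at h2 ⊢
      rw [← h2, SE.beta_zero_right β hβ]
    · rintro rfl; simp
  have hmemY : ∀ x, x ∈ Y ↔ (a' x ≠ a x ∧ a' x ≠ -a x) := by
    intro x; simp [hY]
  have hmem : ∀ x ∈ Y, β (a x) (a' x) ≠ 0 ∧ β (b x) (a' x) = 0 := fun x hx =>
    SE.key_mem β (a x) (b x) (a' x) hβ (ha x) (hb x) (ha' x) (hsupp x).2.2
      ((hmemY x).mp hx)
  have hnotmem : ∀ x ∉ Y, β (a x) (a' x) = 0 ∧ β (b x) (a' x) ≠ 0 := fun x hx => by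
    refine SE.key_notmem β (a x) (b x) (a' x) hβ (ha x) (hb x) (hsupp x).2.2 ?_
    have := (hmemY x).not.mp hx
    by_cases h1 : a' x = a x
    · exact Or.inl h1
    · right
      by_contra h2
      exact this ⟨h1, h2⟩
  constructor
  · intro hL
    rw [isUnit_iff_ne_zero]
    intro hdet
    obtain ⟨v, hv0, hvA⟩ := Matrix.exists_vecMul_eq_zero_iff.mpr hdet
    set c : V → F := fun x => if h : x ∈ Y then v ⟨x, h⟩ else 0 with hc
    have hcY : ∀ x ∉ Y, c x = 0 := fun x hx => dif_neg hx
    have hsum : ∀ x, (∑ i, c i * M i x) = ∑ i : {a // a ∈ Y}, v i * M i.1 x := by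
      intro x
      rw [← Finset.sum_subset (Finset.subset_univ Y)
        (fun i _ hi => by rw [hcY i hi, zero_mul]),
        Finset.sum_subtype Y (fun i => Iff.rfl) (fun i => c i * M i x)]
      exact Finset.sum_congr rfl fun i _ => by
        rw [show c i.1 = v i from dif_pos i.2]
    have hmemf : (∑ i, c i • fi i) ∈ Submodule.span F (Set.range fi) :=
      Submodule.sum_mem _ fun i _ =>
        Submodule.smul_mem _ _ (Submodule.subset_span ⟨i, rfl⟩)
    have horth : ∀ x, β ((∑ i, c i • fi i) x) (a' x) = 0 := by
      intro x
      rw [hβfx]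
      by_cases hx : x ∈ Y
      · rw [(hmem x hx).2, hsum x, mul_zero, add_zero]
        have : (v ᵥ* A) ⟨x, hx⟩ = 0 := by rw [hvA]; rfl
        rw [show (∑ i : {a // a ∈ Y}, v i * M i.1 x) = (v ᵥ* A) ⟨x, hx⟩ from rfl, this,
          zero_mul]
      · rw [(hnotmem x hx).1, hcY x hx, mul_zero, zero_mul, add_zero]
    have hf0 := hL _ hmemf horth
    have hc0 := (hzero c).mp hf0
    apply hv0
    funext i
    have : c i.1 = 0 := congrFun hc0 i.1
    rw [show c i.1 = v i from dif_pos i.2] at this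
    exact this
  · intro hdet f hf horth
    obtain ⟨c, rfl⟩ := (Submodule.mem_span_range_iff_exists_fun F).mp hf
    have horth' : ∀ x, (∑ i, c i * M i x) * β (a x) (a' x)
        + c x * β (b x) (a' x) = 0 := by
      intro x
      rw [← hβfx]
      exact horth x
    have hcY : ∀ x ∉ Y, c x = 0 := by
      intro x hx
      have h := horth' x
      rw [(hnotmem x hx).1, mul_zero, zero_add] at h
      rcases mul_eq_zero.mp h with h | h
      · exact h
      · exact absurd h (hnotmem x hx).2
    have hsY : ∀ x ∈ Y, (∑ i, c i * M i x) = 0 := by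
      intro x hx
      have h := horth' x
      rw [(hmem x hx).2, mul_zero, add_zero] at h
      rcases mul_eq_zero.mp h with h | h
      · exact h
      · exact absurd h (hmem x hx).1
    set v : {a // a ∈ Y} → F := fun i => c i.1 with hv
    have hvA : v ᵥ* A = 0 := by
      funext x
      show ∑ i : {a // a ∈ Y}, v i * M i.1 x.1 = 0
      have : ∑ i : {a // a ∈ Y}, v i * M i.1 x.1 = ∑ i, c i * M i x.1 := by
        rw [← Finset.sum_subset (Finset.subset_univ Y)
          (fun i _ hi => by rw [hcY i hi, zero_mul]),
          Finset.sum_subtype Y (fun i => Iff.rfl) (fun i => c i * M i x.1)]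
      rw [this, hsY x.1 x.2]
    have hv0 : v = 0 := by
      by_contra hv0
      exact (isUnit_iff_ne_zero.mp hdet) (Matrix.exists_vecMul_eq_zero_iff.mp ⟨v, hv0, hvA⟩)
    have hc0 : c = 0 := by
      funext x
      by_cases hx : x ∈ Y
      · exact congrFun hv0 ⟨x, hx⟩
      · exact hcY x hx
    exact (hzero c).mpr hc0
end

section
/- Let M be a V×V matrix over a field, Y ⊆ V with M[Y] nonsingular, and let M' = J M K formed by negating some rows and columns of M (i.e., M' = I_X M I_Z for diagonal ±1 matrices I_X, I_Z). Then M'[Y] is nonsingular and M'*Y can be obtained from M*Y by negating some rows and columns. -/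
open Matrix

variable {V : Type*} [Fintype V] [DecidableEq V] {F : Type*} [Field F]

lemma psub_neg (M : Matrix V V F) (J L : V → F) (X Z : Finset V) :
    psub (Matrix.of fun i j => J i * M i j * L j) X Z
      = Matrix.diagonal (fun i : {a // a ∈ X} => J i) * psub M X Z
          * Matrix.diagonal (fun j : {a // a ∈ Z} => L j) := by
  ext i j
  simp [psub, Matrix.mul_diagonal, Matrix.diagonal_mul, mul_assoc]

lemma diag_pm_mul_self {n : Type*} [Fintype n] [DecidableEq n] (d : n → F)
    (hd : ∀ v, d v = 1 ∨ d v = -1) :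
    Matrix.diagonal d * Matrix.diagonal d = 1 := by
  have hdd : (fun i => d i * d i) = fun _ => (1 : F) :=
    funext fun v => by rcases hd v with h | h <;> simp [h]
  rw [Matrix.diagonal_mul_diagonal, hdd, Matrix.diagonal_one]

lemma diag_pm_inv {n : Type*} [Fintype n] [DecidableEq n] (d : n → F)
    (hd : ∀ v, d v = 1 ∨ d v = -1) :
    (Matrix.diagonal d)⁻¹ = Matrix.diagonal d :=
  Matrix.inv_eq_right_inv (diag_pm_mul_self d hd)

/-- If `M[Y]` is nonsingular and `M'` is obtained from `M` by negating some
rows and columns, then `M'[Y]` is nonsingular and `M'*Y` can be obtained from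
`M*Y` by negating some rows and columns. -/
theorem ppt_negation (M : Matrix V V F) (Y : Finset V)
    (h : IsUnit (psub M Y Y).det) (J L : V → F)
    (hJ : ∀ v, J v = 1 ∨ J v = -1) (hL : ∀ v, L v = 1 ∨ L v = -1) :
    IsUnit (psub (Matrix.of fun i j => J i * M i j * L j) Y Y).det ∧
    ∃ J' L' : V → F, (∀ v, J' v = 1 ∨ J' v = -1) ∧ (∀ v, L' v = 1 ∨ L' v = -1) ∧
      ppt (Matrix.of fun i j => J i * M i j * L j) Y
        = Matrix.of fun i j => J' i * ppt M Y i j * L' j := by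
  classical
  set M' : Matrix V V F := Matrix.of fun i j => J i * M i j * L j with hM'
  set DJY := Matrix.diagonal (fun i : {a // a ∈ Y} => J i) with hDJY
  set DLY := Matrix.diagonal (fun i : {a // a ∈ Y} => L i) with hDLY
  set DJc := Matrix.diagonal (fun i : {a // a ∈ Yᶜ} => J i) with hDJc
  set DLc := Matrix.diagonal (fun i : {a // a ∈ Yᶜ} => L i) with hDLc
  have hJJ : DJY * DJY = 1 :=
    diag_pm_mul_self (fun i : {a // a ∈ Y} => J i) (fun v => hJ v)
  have hLL : DLY * DLY = 1 :=
    diag_pm_mul_self (fun i : {a // a ∈ Y} => L i) (fun v => hL v)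
  have hsub : ∀ X Z : Finset V,
      psub M' X Z = Matrix.diagonal (fun i : {a // a ∈ X} => J i) * psub M X Z
        * Matrix.diagonal (fun j : {a // a ∈ Z} => L j) := fun X Z => psub_neg M J L X Z
  have hinv : (psub M' Y Y)⁻¹ = DLY * (psub M Y Y)⁻¹ * DJY := by
    rw [hsub, Matrix.mul_inv_rev, Matrix.mul_inv_rev,
      diag_pm_inv (fun i : {a // a ∈ Y} => J i) (fun v => hJ v),
      diag_pm_inv (fun i : {a // a ∈ Y} => L i) (fun v => hL v), mul_assoc]
  have hu : IsUnit (psub M' Y Y).det := by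
    rw [hsub, Matrix.det_mul, Matrix.det_mul]
    exact ((Matrix.isUnit_det_of_right_inverse hJJ).mul h).mul
      (Matrix.isUnit_det_of_right_inverse hLL)
  refine ⟨hu, fun v => if v ∈ Y then L v else J v, fun v => if v ∈ Y then J v else L v,
    fun v => by by_cases hv : v ∈ Y <;> simp [hv, hJ v, hL v],
    fun v => by by_cases hv : v ∈ Y <;> simp [hv, hJ v, hL v], ?_⟩
  have h2 : (psub M' Y Y)⁻¹ * psub M' Y Yᶜ
      = DLY * ((psub M Y Y)⁻¹ * psub M Y Yᶜ) * DLc := by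
    rw [hinv, hsub]
    simp only [Matrix.mul_assoc]
    rw [← Matrix.mul_assoc DJY DJY, hJJ, Matrix.one_mul]
  have h3 : -(psub M' Yᶜ Y * (psub M' Y Y)⁻¹)
      = DJc * (-(psub M Yᶜ Y * (psub M Y Y)⁻¹)) * DJY := by
    rw [hinv, hsub]
    simp only [Matrix.mul_neg, Matrix.neg_mul, neg_inj, Matrix.mul_assoc]
    rw [← Matrix.mul_assoc DLY DLY, hLL, Matrix.one_mul]
  have h4 : psub M' Yᶜ Yᶜ - psub M' Yᶜ Y * (psub M' Y Y)⁻¹ * psub M' Y Yᶜ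
      = DJc * (psub M Yᶜ Yᶜ - psub M Yᶜ Y * (psub M Y Y)⁻¹ * psub M Y Yᶜ) * DLc := by
    rw [hinv, hsub, hsub, hsub]
    simp only [Matrix.mul_sub, Matrix.sub_mul, Matrix.mul_assoc]
    rw [← Matrix.mul_assoc DLY DLY, hLL, Matrix.one_mul,
      ← Matrix.mul_assoc DJY DJY, hJJ, Matrix.one_mul]
  ext i j
  by_cases hi : i ∈ Y <;> by_cases hj : j ∈ Y
  · simp only [ppt, Matrix.of_apply, hi, hj, dif_pos, if_pos, if_true, hinv, hDJY, hDLY, hDJc, hDLc,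
      Matrix.mul_diagonal, Matrix.diagonal_mul, mul_comm, mul_assoc, mul_left_comm]
  · simp only [ppt, Matrix.of_apply, hi, hj, dif_pos, dif_neg, not_false_iff, if_pos,
      if_neg, if_true, h2, hDJY, hDLY, hDJc, hDLc, Matrix.mul_diagonal, Matrix.diagonal_mul, mul_comm, mul_assoc, mul_left_comm]
  · simp only [ppt, Matrix.of_apply, hi, hj, dif_pos, dif_neg, not_false_iff, if_pos,
      if_neg, if_true, h3, hDJY, hDLY, hDJc, hDLc, Matrix.mul_diagonal, Matrix.diagonal_mul, mul_comm, mul_assoc, mul_left_comm]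
  · simp only [ppt, Matrix.of_apply, hi, hj, dif_pos, dif_neg, not_false_iff, if_pos,
      if_neg, if_true, h4, hDJY, hDLY, hDJc, hDLc, Matrix.mul_diagonal, Matrix.diagonal_mul, mul_comm, mul_assoc, mul_left_comm]
end
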